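/- (Holmstedt's formula for (l^1, l^2)) There is a universal constant B ≥ 1 such that for every a ∈ l^2 and t > 0, K(t, a; l^1, l^2) ≤ Σ_{k=1}^{[t²]} a_k* + t (Σ_{k=[t²]+1}^∞ (a_k*)²)^{1/2} ≤ B · K(t, a; l^1, l^2), where (a_k*) is the nonincreasing rearrangement of (|a_k|) and [t²] is the integer part of t². -/

import Mathlib

/-!
Upper bound: with `i₀` an index of a largest `|a i|`, moving `a i₀` into the `ℓ¹` part costs
`|a i₀| = a*₀`, and deleting that entry shifts the rearrangement by one place; after `⌊t²⌋` such
steps the remainder goes into the `ℓ²` part, where `∑ i, a i ^ 2 = ∑ k, (a*ₖ)²`.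

Lower bound, for any splitting `a = b + c`: `a*ₖ ≤ b*_{k/2} + c*_{k/2}`. With `n = ⌊t²⌋`, the head
`∑_{k<n} a*ₖ` is at most `2‖b‖₁ + 2t‖c‖₂` by Cauchy–Schwarz and `n ≤ t²`. For the tail, a
nonincreasing sequence satisfies `(m + 1) ∑_{k≥m} xₖ² ≤ (∑ xₖ)²`, which with `t² < n + 1` gives
`t² ∑_{k≥n} (b*_{k/2})² ≤ 4‖b‖₁²`. Altogether `B = 5` works.
-/

open MeasureTheory
open scoped ENNReal

/-- The nonincreasing rearrangement of the sequence `(|a_k|)` (0-indexed). -/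
noncomputable def decRearrSeq (a : ℕ → ℝ) (k : ℕ) : ℝ :=
  sInf {τ : ℝ | 0 ≤ τ ∧ Measure.count {i : ℕ | τ < |a i|} ≤ (k : ℝ≥0∞)}

/-- The Peetre K-functional for the couple `(ℓ¹, ℓ²)`. -/
noncomputable def Kl (t : ℝ) (a : ℕ → ℝ) : ℝ≥0∞ :=
  ⨅ (b : ℕ → ℝ) (c : ℕ → ℝ) (_ : a = b + c),
    (∑' k, ENNReal.ofReal |b k|) +
      ENNReal.ofReal t * (∑' k, ENNReal.ofReal ((c k) ^ 2)) ^ (1/2 : ℝ)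

/-- The Holmstedt expression `∑_{k=1}^{[t²]} a_k* + t (∑_{k=[t²]+1}^∞ (a_k*)²)^{1/2}`. -/
noncomputable def holmstedt (t : ℝ) (a : ℕ → ℝ) : ℝ≥0∞ :=
  (∑ k ∈ Finset.range ⌊t ^ 2⌋₊, ENNReal.ofReal (decRearrSeq a k)) +
    ENNReal.ofReal t *
      (∑' k : ℕ, ENNReal.ofReal ((decRearrSeq a (⌊t ^ 2⌋₊ + k)) ^ 2)) ^ (1/2 : ℝ)

open Filter Topology Set
open ENNReal (ofReal)

section Rearrangement

variable {a b c : ℕ → ℝ}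

lemma finite_setOf_le_abs (ha : Tendsto a cofinite (𝓝 0)) {ε : ℝ} (hε : 0 < ε) :
    {i | ε ≤ |a i|}.Finite := by
  have h := ha.abs.eventually (gt_mem_nhds (a := ε) (by simpa using hε))
  simpa [not_lt] using eventually_cofinite.1 h

lemma exists_forall_abs_le (ha : Tendsto a cofinite (𝓝 0)) : ∃ i₀, ∀ i, |a i| ≤ |a i₀| := by
  by_cases h : ∀ i, a i = 0
  · exact ⟨0, fun i => by simp [h]⟩
  push Not at h
  obtain ⟨j, hj⟩ := h
  obtain ⟨i₀, hi₀, hmax⟩ := Set.exists_max_image _ (fun i => |a i|)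
    (finite_setOf_le_abs ha (abs_pos.2 hj)) ⟨j, le_refl |a j|⟩
  exact ⟨i₀, fun i => (le_total |a j| |a i|).elim (hmax i) fun h => h.trans hi₀⟩

lemma tendsto_cofinite_zero_of_summable_sq (h : Summable fun k => a k ^ 2) :
    Tendsto a cofinite (𝓝 0) := by
  rw [tendsto_zero_iff_abs_tendsto_zero]
  simpa [Real.sqrt_sq_eq_abs, Function.comp_def] using h.tendsto_cofinite_zero.sqrt

lemma count_le_natCast_iff {α : Type*} [MeasurableSpace α] [DiscreteMeasurableSpace α]
    {s : Set α} {k : ℕ} :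
    Measure.count s ≤ (k : ℝ≥0∞) ↔ s.encard ≤ k := by
  rw [Measure.count_apply .of_discrete]
  norm_cast

lemma decRearrSeq_eq_sInf (a : ℕ → ℝ) (k : ℕ) :
    decRearrSeq a k = sInf {τ : ℝ | 0 ≤ τ ∧ {i | τ < |a i|}.encard ≤ k} := by
  simp_rw [decRearrSeq, count_le_natCast_iff]

lemma decRearrSeq_nonneg (a : ℕ → ℝ) (k : ℕ) : 0 ≤ decRearrSeq a k :=
  Real.sInf_nonneg fun _ h => h.1

lemma decRearrSeq_le {k : ℕ} {τ : ℝ} (hτ : 0 ≤ τ) (h : {i | τ < |a i|}.encard ≤ k) :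
    decRearrSeq a k ≤ τ := by
  rw [decRearrSeq_eq_sInf]
  exact csInf_le ⟨0, fun _ h => h.1⟩ ⟨hτ, h⟩

-- The infimum defining `decRearrSeq` is attained. This needs `ha`: without it the defining set
-- can be empty, and then `decRearrSeq a k = sInf ∅ = 0`.
lemma encard_setOf_decRearrSeq_lt_le (ha : Tendsto a cofinite (𝓝 0)) (k : ℕ) :
    {i | decRearrSeq a k < |a i|}.encard ≤ k := by
  obtain ⟨i₀, hi₀⟩ := exists_forall_abs_le ha
  have hne : {τ : ℝ | 0 ≤ τ ∧ {i | τ < |a i|}.encard ≤ k}.Nonempty :=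
    ⟨|a i₀|, abs_nonneg _, by simp [not_lt.2 (hi₀ _)]⟩
  by_contra! hk
  obtain ⟨F, hFsub, hFcard⟩ := exists_subset_encard_eq (Order.add_one_le_of_lt hk)
  have hFfin : F.Finite := finite_of_encard_eq_coe hFcard
  have hFne : F.Nonempty := nonempty_of_encard_ne_zero (by simp [hFcard])
  obtain ⟨m, hmF, hmin⟩ := Set.exists_min_image F (fun i => |a i|) hFfin hFne
  have hlt : decRearrSeq a k < |a m| := hFsub hmF
  rw [decRearrSeq_eq_sInf] at hlt
  obtain ⟨τ, ⟨-, hτ⟩, hτm⟩ := (csInf_lt_iff ⟨0, fun _ h => h.1⟩ hne).1 hlt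
  have : F.encard ≤ k := (encard_le_encard fun i hi => hτm.trans_le (hmin i hi)).trans hτ
  rw [hFcard] at this
  exact absurd this (by exact_mod_cast (Nat.lt_succ_self k).not_ge)

lemma decRearrSeq_antitone (ha : Tendsto a cofinite (𝓝 0)) : Antitone (decRearrSeq a) :=
  fun _ _ hjk => decRearrSeq_le (decRearrSeq_nonneg a _)
    ((encard_setOf_decRearrSeq_lt_le ha _).trans (by exact_mod_cast hjk))

lemma le_decRearrSeq (ha : Tendsto a cofinite (𝓝 0)) {F : Finset ℕ} {k : ℕ} (hk : k < F.card)
    {x : ℝ} (hx : ∀ i ∈ F, x ≤ |a i|) : x ≤ decRearrSeq a k := by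
  by_contra! hlt
  have : ((F : Set ℕ)).encard ≤ k :=
    (encard_le_encard fun i hi => hlt.trans_le (hx i hi)).trans
      (encard_setOf_decRearrSeq_lt_le ha k)
  rw [encard_coe_eq_coe_finsetCard] at this
  exact hk.not_ge (by exact_mod_cast this)

lemma decRearrSeq_zero_of_forall_abs_le (ha : Tendsto a cofinite (𝓝 0)) {i₀ : ℕ}
    (hi₀ : ∀ i, |a i| ≤ |a i₀|) : decRearrSeq a 0 = |a i₀| :=
  le_antisymm (decRearrSeq_le (abs_nonneg _) (by simp [not_lt.2 (hi₀ _)]))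
    (le_decRearrSeq ha (F := {i₀}) (by simp) (by simp))

lemma decRearrSeq_update_of_forall_abs_le {i₀ : ℕ} (hi₀ : ∀ i, |a i| ≤ |a i₀|) (k : ℕ) :
    decRearrSeq (Function.update a i₀ 0) k = decRearrSeq a (k + 1) := by
  simp_rw [decRearrSeq_eq_sInf]
  congr 1
  ext τ
  refine and_congr_right fun hτ => ?_
  have hset : {i | τ < |Function.update a i₀ 0 i|} = {i | τ < |a i|} \ {i₀} := by
    ext i
    rcases eq_or_ne i i₀ with rfl | hi <;> simp [*, not_lt.2 hτ]
  rw [hset]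
  by_cases hτi₀ : τ < |a i₀|
  · rw [← encard_sdiff_singleton_add_one (show i₀ ∈ {i | τ < |a i|} from hτi₀), Nat.cast_add,
      Nat.cast_one, ENat.add_le_add_iff_right ENat.one_ne_top]
  · have hempty : {i | τ < |a i|} = ∅ :=
      eq_empty_of_forall_notMem fun i hi => hτi₀ (lt_of_lt_of_le hi (hi₀ i))
    simp [hempty]

lemma decRearrSeq_add_le (hb : Tendsto b cofinite (𝓝 0)) (hc : Tendsto c cofinite (𝓝 0))
    (j k : ℕ) : decRearrSeq (b + c) (j + k) ≤ decRearrSeq b j + decRearrSeq c k := by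
  refine decRearrSeq_le (add_nonneg (decRearrSeq_nonneg b j) (decRearrSeq_nonneg c k)) ?_
  have hsub : {i | decRearrSeq b j + decRearrSeq c k < |(b + c) i|} ⊆
      {i | decRearrSeq b j < |b i|} ∪ {i | decRearrSeq c k < |c i|} := by
    intro i hi
    by_contra! h
    simp only [mem_union, mem_ofPred_eq, not_or, not_lt] at h
    exact (abs_add_le (b i) (c i)).not_gt (hi.trans_le' (add_le_add h.1 h.2))
  calc _ ≤ _ := encard_le_encard hsub
    _ ≤ _ := encard_union_le _ _
    _ ≤ j + k := add_le_add (encard_setOf_decRearrSeq_lt_le hb j)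
        (encard_setOf_decRearrSeq_lt_le hc k)
    _ = ((j + k : ℕ) : ℕ∞) := by push_cast; rfl

variable {g : ℝ → ℝ}

lemma sum_ofReal_le_sum_range_decRearrSeq (ha : Tendsto a cofinite (𝓝 0))
    (hg : MonotoneOn g (Ici 0)) (F : Finset ℕ) :
    ∑ i ∈ F, ofReal (g |a i|) ≤ ∑ k ∈ Finset.range F.card, ofReal (g (decRearrSeq a k)) := by
  induction F using Finset.induction_on_min_value (fun i => |a i|) with
  | empty => simp
  | insert m F hm hmin ih =>
    rw [Finset.sum_insert hm, Finset.card_insert_of_notMem hm, Finset.sum_range_succ, add_comm]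
    have hle : |a m| ≤ decRearrSeq a F.card :=
      le_decRearrSeq ha (F := insert m F) (by simp [hm]) (by simpa using hmin)
    exact add_le_add ih
      (ENNReal.ofReal_le_ofReal (hg (abs_nonneg (a m)) (decRearrSeq_nonneg a _) hle))

lemma sum_range_decRearrSeq_le_tsum (ha : Tendsto a cofinite (𝓝 0)) (hg0 : g 0 = 0) (n : ℕ) :
    ∑ k ∈ Finset.range n, ofReal (g (decRearrSeq a k)) ≤ ∑' i, ofReal (g |a i|) := by
  induction n generalizing a with
  | zero => simp
  | succ n ih =>
    obtain ⟨i₀, hi₀⟩ := exists_forall_abs_le ha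
    have ha' := ha.congr' (Function.update_eventuallyEq_cofinite a i₀ 0).symm
    rw [Finset.sum_range_succ', ENNReal.tsum_eq_add_tsum_ite i₀, add_comm,
      decRearrSeq_zero_of_forall_abs_le ha hi₀]
    gcongr
    calc ∑ k ∈ Finset.range n, ofReal (g (decRearrSeq a (k + 1)))
        = ∑ k ∈ Finset.range n, ofReal (g (decRearrSeq (Function.update a i₀ 0) k)) := by
          simp_rw [decRearrSeq_update_of_forall_abs_le hi₀]
      _ ≤ ∑' i, ofReal (g |Function.update a i₀ 0 i|) := ih ha'
      _ = _ :=
          tsum_congr fun i => by rcases eq_or_ne i i₀ with rfl | h <;> simp [*]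

lemma tsum_ofReal_decRearrSeq (ha : Tendsto a cofinite (𝓝 0)) (hg0 : g 0 = 0)
    (hg : MonotoneOn g (Ici 0)) :
    ∑' k, ofReal (g (decRearrSeq a k)) = ∑' i, ofReal (g |a i|) := by
  refine le_antisymm
    (ENNReal.tsum_le_of_sum_range_le fun n => sum_range_decRearrSeq_le_tsum ha hg0 n) ?_
  rw [ENNReal.tsum_eq_iSup_sum]
  exact iSup_le fun F =>
    (sum_ofReal_le_sum_range_decRearrSeq ha hg F).trans (ENNReal.sum_le_tsum _)

lemma tsum_ofReal_decRearrSeq_id (ha : Tendsto a cofinite (𝓝 0)) :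
    ∑' k, ofReal (decRearrSeq a k) = ∑' i, ofReal |a i| :=
  tsum_ofReal_decRearrSeq (g := id) ha rfl monotoneOn_id

lemma tsum_ofReal_decRearrSeq_sq (ha : Tendsto a cofinite (𝓝 0)) :
    ∑' k, ofReal (decRearrSeq a k ^ 2) = ∑' i, ofReal (a i ^ 2) := by
  simpa using tsum_ofReal_decRearrSeq (g := (· ^ 2)) ha (by simp)
    fun x hx y _ hxy => pow_le_pow_left₀ hx hxy 2

end Rearrangement

lemma Kl_le_of_eq_add {t : ℝ} {a b c : ℕ → ℝ} (h : a = b + c) :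
    Kl t a ≤ (∑' k, ofReal |b k|) + ofReal t * (∑' k, ofReal (c k ^ 2)) ^ (1/2 : ℝ) :=
  iInf_le_of_le b (iInf_le_of_le c (iInf_le_of_le h le_rfl))

lemma Kl_add_le (t : ℝ) (a d : ℕ → ℝ) : Kl t (a + d) ≤ (∑' k, ofReal |d k|) + Kl t a := by
  conv_rhs => rw [Kl]
  simp only [ENNReal.add_iInf]
  refine le_iInf fun b => le_iInf fun c => le_iInf fun h => ?_
  calc Kl t (a + d)
      ≤ (∑' k, ofReal |(b + d) k|) + ofReal t * (∑' k, ofReal (c k ^ 2)) ^ (1/2 : ℝ) :=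
        Kl_le_of_eq_add (by rw [h]; abel)
    _ ≤ _ := by
        rw [← add_assoc, ← ENNReal.tsum_add]
        gcongr with k
        rw [add_comm]
        exact (ENNReal.ofReal_le_ofReal (abs_add_le _ _)).trans ENNReal.ofReal_add_le

lemma Kl_le_ofReal_abs_add_Kl_update (t : ℝ) (a : ℕ → ℝ) (i₀ : ℕ) :
    Kl t a ≤ ofReal |a i₀| + Kl t (Function.update a i₀ 0) := by
  have hsplit : Function.update a i₀ 0 + Pi.single i₀ (a i₀) = a := by
    funext i
    rcases eq_or_ne i i₀ with rfl | h <;> simp [*]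
  have hsingle : ∑' k, ofReal |(Pi.single i₀ (a i₀) : ℕ → ℝ) k| = ofReal |a i₀| :=
    (tsum_eq_single i₀ fun k hk => by simp [hk]).trans (by simp)
  simpa [hsplit, hsingle] using Kl_add_le t (Function.update a i₀ 0) (Pi.single i₀ (a i₀))

lemma Kl_le_sum_range_add_tail (t : ℝ) (n : ℕ) {a : ℕ → ℝ} (ha : Tendsto a cofinite (𝓝 0)) :
    Kl t a ≤ ∑ k ∈ Finset.range n, ofReal (decRearrSeq a k) +
      ofReal t * (∑' j, ofReal (decRearrSeq a (n + j) ^ 2)) ^ (1/2 : ℝ) := by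
  induction n generalizing a with
  | zero =>
    simpa [tsum_ofReal_decRearrSeq_sq ha] using Kl_le_of_eq_add (t := t) (zero_add a).symm
  | succ n ih =>
    obtain ⟨i₀, hi₀⟩ := exists_forall_abs_le ha
    have ih' := ih (ha.congr' (Function.update_eventuallyEq_cofinite a i₀ 0).symm)
    simp only [decRearrSeq_update_of_forall_abs_le hi₀, add_right_comm n _ 1] at ih'
    calc Kl t a ≤ ofReal |a i₀| + Kl t (Function.update a i₀ 0) :=
          Kl_le_ofReal_abs_add_Kl_update t a i₀
      _ ≤ _ := by
          rw [Finset.sum_range_succ', decRearrSeq_zero_of_forall_abs_le ha hi₀,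
            add_comm _ (ofReal _), add_assoc]
          gcongr

lemma ENNReal.tsum_comp_div_two (f : ℕ → ℝ≥0∞) : ∑' k, f (k / 2) = 2 * ∑' k, f k := by
  rw [← tsum_even_add_odd ENNReal.summable ENNReal.summable, two_mul]
  congr 1 <;> congr 1 <;> funext k <;> congr 1 <;> omega

lemma ENNReal.sq_sum_le_card_mul_sum_sq {ι : Type*} (s : Finset ι) (f : ι → ℝ≥0∞) :
    (∑ i ∈ s, f i) ^ 2 ≤ s.card * ∑ i ∈ s, f i ^ 2 := by
  simpa [ENNReal.rpow_two, show (2 : ℝ) - 1 = 1 by norm_num] using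
    ENNReal.rpow_sum_le_const_mul_sum_rpow s f (p := 2) (by norm_num)

lemma ENNReal.rpow_half_sq (x : ℝ≥0∞) : (x ^ (1/2 : ℝ)) ^ 2 = x := by
  rw [← ENNReal.rpow_natCast, ← ENNReal.rpow_mul]
  norm_num

lemma Antitone.natCast_add_one_mul_tsum_sq_le {x : ℕ → ℝ≥0∞} (hx : Antitone x) (m : ℕ) :
    ((m : ℝ≥0∞) + 1) * ∑' k, x (m + k) ^ 2 ≤ (∑' k, x k) ^ 2 := by
  have htail : ∑' k, x (m + k) ^ 2 ≤ x m * ∑' k, x k :=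
    calc ∑' k, x (m + k) ^ 2 ≤ ∑' k, x m * x (m + k) :=
          ENNReal.tsum_le_tsum fun k => by rw [sq]; gcongr; exact hx (by omega)
      _ = x m * ∑' k, x (m + k) := ENNReal.tsum_mul_left
      _ ≤ x m * ∑' k, x k :=
          mul_le_mul_right (ENNReal.tsum_comp_le_tsum_of_injective (add_right_injective m) x) _
  have hhead : ((m : ℝ≥0∞) + 1) * x m ≤ ∑' k, x k :=
    calc ((m : ℝ≥0∞) + 1) * x m = ∑ _k ∈ Finset.range (m + 1), x m := by simp
      _ ≤ ∑ k ∈ Finset.range (m + 1), x k :=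
          Finset.sum_le_sum fun k hk => hx (Nat.lt_succ_iff.1 (Finset.mem_range.1 hk))
      _ ≤ ∑' k, x k := ENNReal.sum_le_tsum _
  calc ((m : ℝ≥0∞) + 1) * ∑' k, x (m + k) ^ 2 ≤ ((m : ℝ≥0∞) + 1) * x m * ∑' k, x k := by
        rw [mul_assoc]; gcongr
    _ ≤ (∑' k, x k) ^ 2 := by rw [sq]; gcongr

section LowerBound

variable {b c : ℕ → ℝ}

lemma decRearrSeq_add_le_half (hb : Tendsto b cofinite (𝓝 0)) (hc : Tendsto c cofinite (𝓝 0))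
    (k : ℕ) : decRearrSeq (b + c) k ≤ decRearrSeq b (k / 2) + decRearrSeq c (k / 2) :=
  (decRearrSeq_antitone (add_zero (0 : ℝ) ▸ hb.add hc) (by omega : k / 2 + k / 2 ≤ k)).trans
    (decRearrSeq_add_le hb hc _ _)

lemma ofReal_decRearrSeq_add_sq_le (hb : Tendsto b cofinite (𝓝 0))
    (hc : Tendsto c cofinite (𝓝 0)) (k : ℕ) :
    ofReal (decRearrSeq (b + c) k ^ 2) ≤
      2 * ofReal (decRearrSeq b (k / 2) ^ 2) + 2 * ofReal (decRearrSeq c (k / 2) ^ 2) := by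
  have hsq : decRearrSeq (b + c) k ^ 2 ≤
      2 * (decRearrSeq b (k / 2) ^ 2 + decRearrSeq c (k / 2) ^ 2) :=
    (pow_le_pow_left₀ (decRearrSeq_nonneg _ _) (decRearrSeq_add_le_half hb hc k) 2).trans add_sq_le
  refine (ENNReal.ofReal_le_ofReal hsq).trans_eq ?_
  rw [ENNReal.ofReal_mul zero_le_two, ENNReal.ofReal_add (sq_nonneg _) (sq_nonneg _), mul_add]
  norm_num

lemma sum_range_decRearrSeq_add_le (hb : Tendsto b cofinite (𝓝 0))
    (hc : Tendsto c cofinite (𝓝 0)) {n : ℕ} {s : ℝ≥0∞} (hn : (n : ℝ≥0∞) ≤ s ^ 2) :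
    ∑ k ∈ Finset.range n, ofReal (decRearrSeq (b + c) k) ≤
      2 * ∑' k, ofReal |b k| + 2 * (s * (∑' k, ofReal (c k ^ 2)) ^ (1/2 : ℝ)) := by
  have hsplit : ∑ k ∈ Finset.range n, ofReal (decRearrSeq (b + c) k) ≤
      ∑ k ∈ Finset.range n, ofReal (decRearrSeq b (k / 2)) +
        ∑ k ∈ Finset.range n, ofReal (decRearrSeq c (k / 2)) := by
    rw [← Finset.sum_add_distrib]
    exact Finset.sum_le_sum fun k _ =>
      (ENNReal.ofReal_le_ofReal (decRearrSeq_add_le_half hb hc k)).trans ENNReal.ofReal_add_le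
  have hb' : ∑ k ∈ Finset.range n, ofReal (decRearrSeq b (k / 2)) ≤ 2 * ∑' k, ofReal |b k| := by
    rw [← tsum_ofReal_decRearrSeq_id hb, ← ENNReal.tsum_comp_div_two]
    exact ENNReal.sum_le_tsum _
  have hc' : ∑ k ∈ Finset.range n, ofReal (decRearrSeq c (k / 2)) ≤
      2 * (s * (∑' k, ofReal (c k ^ 2)) ^ (1/2 : ℝ)) := by
    refine (ENNReal.pow_le_pow_left_iff two_ne_zero).1 ?_
    calc (∑ k ∈ Finset.range n, ofReal (decRearrSeq c (k / 2))) ^ 2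
        ≤ n * ∑ k ∈ Finset.range n, ofReal (decRearrSeq c (k / 2)) ^ 2 := by
          simpa using ENNReal.sq_sum_le_card_mul_sum_sq (Finset.range n) _
      _ ≤ s ^ 2 * (2 * ∑' k, ofReal (c k ^ 2)) := by
          gcongr
          simp_rw [← ENNReal.ofReal_pow (decRearrSeq_nonneg _ _)]
          rw [← tsum_ofReal_decRearrSeq_sq hc, ← ENNReal.tsum_comp_div_two]
          exact ENNReal.sum_le_tsum _
      _ ≤ 2 ^ 2 * (s ^ 2 * ∑' k, ofReal (c k ^ 2)) := by
          rw [mul_left_comm]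
          gcongr
          norm_num
      _ = _ := by rw [mul_pow, mul_pow, ENNReal.rpow_half_sq]
  exact hsplit.trans (add_le_add hb' hc')

lemma natCast_add_one_mul_tsum_decRearrSeq_half_sq_le (hb : Tendsto b cofinite (𝓝 0)) (n : ℕ) :
    ((n : ℝ≥0∞) + 1) * ∑' j, ofReal (decRearrSeq b ((n + j) / 2) ^ 2) ≤
      4 * (∑' k, ofReal |b k|) ^ 2 := by
  set x : ℕ → ℝ≥0∞ := fun k => ofReal (decRearrSeq b k)
  have hx : Antitone x := fun _ _ h => ENNReal.ofReal_le_ofReal (decRearrSeq_antitone hb h)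
  calc ((n : ℝ≥0∞) + 1) * ∑' j, ofReal (decRearrSeq b ((n + j) / 2) ^ 2)
      ≤ (2 * ((n / 2 : ℕ) + 1)) * (2 * ∑' j, x (n / 2 + j) ^ 2) := by
        gcongr
        · exact_mod_cast (by omega : n + 1 ≤ 2 * (n / 2 + 1))
        · rw [← ENNReal.tsum_comp_div_two]
          refine ENNReal.tsum_le_tsum fun j => ?_
          rw [ENNReal.ofReal_pow (decRearrSeq_nonneg _ _)]
          exact pow_le_pow_left' (hx (by omega)) 2
    _ = 4 * (((n / 2 : ℕ) + 1) * ∑' j, x (n / 2 + j) ^ 2) := by ring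
    _ ≤ 4 * (∑' k, ofReal |b k|) ^ 2 := by
        rw [← tsum_ofReal_decRearrSeq_id hb]
        gcongr
        exact hx.natCast_add_one_mul_tsum_sq_le _

lemma mul_rpow_half_tsum_decRearrSeq_add_sq_le (hb : Tendsto b cofinite (𝓝 0))
    (hc : Tendsto c cofinite (𝓝 0)) {n : ℕ} {s : ℝ≥0∞} (hn : s ^ 2 ≤ n + 1) :
    s * (∑' j, ofReal (decRearrSeq (b + c) (n + j) ^ 2)) ^ (1/2 : ℝ) ≤
      3 * ∑' k, ofReal |b k| + 2 * (s * (∑' k, ofReal (c k ^ 2)) ^ (1/2 : ℝ)) := by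
  set β := ∑' k, ofReal |b k|
  set γ := ∑' k, ofReal (c k ^ 2)
  have hγ : ∑' k, ofReal (decRearrSeq c k ^ 2) = γ := tsum_ofReal_decRearrSeq_sq hc
  have hSb : s ^ 2 * (2 * ∑' j, ofReal (decRearrSeq b ((n + j) / 2) ^ 2)) ≤ 8 * β ^ 2 :=
    calc s ^ 2 * (2 * ∑' j, ofReal (decRearrSeq b ((n + j) / 2) ^ 2))
        ≤ 2 * (((n : ℝ≥0∞) + 1) * ∑' j, ofReal (decRearrSeq b ((n + j) / 2) ^ 2)) := by
          rw [mul_left_comm]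
          gcongr
      _ ≤ 8 * β ^ 2 := by
          rw [show (8 : ℝ≥0∞) = 2 * 4 by norm_num, mul_assoc]
          exact mul_le_mul_right (natCast_add_one_mul_tsum_decRearrSeq_half_sq_le hb n) 2
  have hSc : s ^ 2 * (2 * ∑' j, ofReal (decRearrSeq c ((n + j) / 2) ^ 2)) ≤ 4 * (s ^ 2 * γ) :=
    calc s ^ 2 * (2 * ∑' j, ofReal (decRearrSeq c ((n + j) / 2) ^ 2))
        ≤ s ^ 2 * (2 * (2 * γ)) := by
          gcongr
          rw [← hγ, ← ENNReal.tsum_comp_div_two]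
          exact ENNReal.tsum_le_tsum fun j => ENNReal.ofReal_le_ofReal
            (pow_le_pow_left₀ (decRearrSeq_nonneg _ _) (decRearrSeq_antitone hc (by omega)) 2)
      _ = 4 * (s ^ 2 * γ) := by ring
  refine (ENNReal.pow_le_pow_left_iff two_ne_zero).1 ?_
  calc (s * (∑' j, ofReal (decRearrSeq (b + c) (n + j) ^ 2)) ^ (1/2 : ℝ)) ^ 2
      = s ^ 2 * ∑' j, ofReal (decRearrSeq (b + c) (n + j) ^ 2) := by
        rw [mul_pow, ENNReal.rpow_half_sq]
    _ ≤ s ^ 2 * (2 * ∑' j, ofReal (decRearrSeq b ((n + j) / 2) ^ 2) +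
          2 * ∑' j, ofReal (decRearrSeq c ((n + j) / 2) ^ 2)) := by
        gcongr
        rw [← ENNReal.tsum_mul_left, ← ENNReal.tsum_mul_left, ← ENNReal.tsum_add]
        exact ENNReal.tsum_le_tsum fun j => ofReal_decRearrSeq_add_sq_le hb hc _
    _ ≤ 8 * β ^ 2 + 4 * (s ^ 2 * γ) := by
        rw [mul_add]
        exact add_le_add hSb hSc
    _ ≤ 3 ^ 2 * β ^ 2 + 2 ^ 2 * (s ^ 2 * γ) := by gcongr <;> norm_num
    _ ≤ (3 * β + 2 * (s * γ ^ (1/2 : ℝ))) ^ 2 := by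
        rw [add_sq, mul_pow, mul_pow, mul_pow, ENNReal.rpow_half_sq, ← mul_pow]
        gcongr
        exact le_self_add

lemma holmstedt_add_le (hb : Tendsto b cofinite (𝓝 0)) (hc : Tendsto c cofinite (𝓝 0))
    {t : ℝ} (ht : 0 ≤ t) :
    holmstedt t (b + c) ≤
      5 * ((∑' k, ofReal |b k|) + ofReal t * (∑' k, ofReal (c k ^ 2)) ^ (1/2 : ℝ)) := by
  have hs : ofReal t ^ 2 = ofReal (t ^ 2) := (ENNReal.ofReal_pow ht 2).symm
  have hfloor : (⌊t ^ 2⌋₊ : ℝ≥0∞) ≤ ofReal t ^ 2 := by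
    rw [hs, ← ENNReal.ofReal_natCast]
    exact ENNReal.ofReal_le_ofReal (Nat.floor_le (sq_nonneg t))
  have hfloor' : ofReal t ^ 2 ≤ ⌊t ^ 2⌋₊ + 1 := by
    rw [hs, ← ENNReal.ofReal_natCast, ← ENNReal.ofReal_one, ← ENNReal.ofReal_add (by positivity)
      zero_le_one]
    exact ENNReal.ofReal_le_ofReal (Nat.lt_floor_add_one _).le
  calc holmstedt t (b + c)
      ≤ (2 * ∑' k, ofReal |b k| + 2 * (ofReal t * (∑' k, ofReal (c k ^ 2)) ^ (1/2 : ℝ))) +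
        (3 * ∑' k, ofReal |b k| + 2 * (ofReal t * (∑' k, ofReal (c k ^ 2)) ^ (1/2 : ℝ))) :=
        add_le_add (sum_range_decRearrSeq_add_le hb hc hfloor)
          (mul_rpow_half_tsum_decRearrSeq_add_sq_le hb hc hfloor')
    _ = 5 * ∑' k, ofReal |b k| + 4 * (ofReal t * (∑' k, ofReal (c k ^ 2)) ^ (1/2 : ℝ)) := by ring
    _ ≤ _ := by
        rw [mul_add]
        gcongr
        norm_num

lemma tendsto_cofinite_zero_of_tsum_ofReal_abs_ne_top (h : ∑' k, ofReal |b k| ≠ ⊤) :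
    Tendsto b cofinite (𝓝 0) := by
  have := ENNReal.summable_toReal h
  simp only [ENNReal.toReal_ofReal (abs_nonneg _)] at this
  exact this.of_abs.tendsto_cofinite_zero

lemma tendsto_cofinite_zero_of_tsum_ofReal_sq_ne_top (h : ∑' k, ofReal (c k ^ 2) ≠ ⊤) :
    Tendsto c cofinite (𝓝 0) := by
  have := ENNReal.summable_toReal h
  simp only [ENNReal.toReal_ofReal (sq_nonneg _)] at this
  exact tendsto_cofinite_zero_of_summable_sq this

lemma holmstedt_le_mul_Kl {t : ℝ} (ht : 0 < t) (a : ℕ → ℝ) : holmstedt t a ≤ 5 * Kl t a := by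
  rw [Kl]
  simp only [ENNReal.mul_iInf_of_ne (by norm_num : (5 : ℝ≥0∞) ≠ 0) ENNReal.ofNat_ne_top]
  refine le_iInf fun b => le_iInf fun c => le_iInf fun h => ?_
  subst h
  by_cases hβ : ∑' k, ofReal |b k| = ⊤
  · simp [hβ]
  by_cases hγ : ∑' k, ofReal (c k ^ 2) = ⊤
  · simp [hγ, ht]
  exact holmstedt_add_le (tendsto_cofinite_zero_of_tsum_ofReal_abs_ne_top hβ)
    (tendsto_cofinite_zero_of_tsum_ofReal_sq_ne_top hγ) ht.le

end LowerBound

/-- Holmstedt's formula for the couple `(ℓ¹, ℓ²)`: there is a universal `B ≥ 1` with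
`K(t,a;ℓ¹,ℓ²) ≤ ∑_{k≤[t²]} a_k* + t (∑_{k>[t²]} (a_k*)²)^{1/2} ≤ B K(t,a;ℓ¹,ℓ²)`. -/
theorem holmstedt_l1_l2 :
    ∃ B : ℝ, 1 ≤ B ∧ ∀ (a : ℕ → ℝ), Summable (fun k => (a k) ^ 2) →
      ∀ t : ℝ, 0 < t →
        Kl t a ≤ holmstedt t a ∧ holmstedt t a ≤ ENNReal.ofReal B * Kl t a := by
  refine ⟨5, by norm_num, fun a ha t ht => ⟨?_, ?_⟩⟩
  · exact Kl_le_sum_range_add_tail t _ (tendsto_cofinite_zero_of_summable_sq ha)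
  · simpa using holmstedt_le_mul_Kl ht a
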